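/- arXiv:2602.21021 — 6 statements merged into one kernel-verified Lean document; each statement's English description precedes it below -/
import Mathlib

section
/- Let σ be a nonzero finite Borel measure on the unit circle 𝕊¹ ⊆ ℂ. Suppose that for every α ∈ 𝕊¹ the translated measure σ^α (the pushforward of σ under the map z ↦ α·z) is absolutely continuous with respect to σ. Then σ and the Haar probability measure on 𝕊¹ are mutually absolutely continuous (i.e. σ is equivalent to the Haar measure). -/
open MeasureTheory

noncomputable instance : MeasurableSpace Circle := borel Circle
instance : BorelSpace Circle := ⟨rfl⟩

/-!
Let `μ` be a right-invariant (e.g. Haar) measure. By Fubini and the right invariance of `μ`,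
the set `{(α, z) | α z ∈ A}` has `μ × σ`-measure `μ A · σ(G)`, while its `α`-slices are the
sets `α⁻¹ A`, which all have the same `σ`-null-ness as `A` when `σ` is quasi-invariant. Hence
`σ A = 0` iff the product measure vanishes iff `μ A = 0` (using `μ ≠ 0` and `σ ≠ 0`
respectively).
-/

namespace MeasureTheory.Measure

variable {G : Type*} [Group G] [MeasurableSpace G] [MeasurableMul₂ G]

def IsMulLeftQuasiInvariant (σ : Measure G) : Prop :=
  ∀ α : G, σ.map (α * ·) ≪ σ

theorem IsMulLeftQuasiInvariant.measure_preimage_mul_left_eq_zero_iff {σ : Measure G}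
    (hσ : σ.IsMulLeftQuasiInvariant) (α : G) {A : Set G} (hA : MeasurableSet A) :
    σ ((α * ·) ⁻¹' A) = 0 ↔ σ A = 0 := by
  have map_apply_eq (β : G) {B : Set G} (hB : MeasurableSet B) :
      σ.map (β * ·) B = σ ((β * ·) ⁻¹' B) :=
    map_apply (measurable_const_mul β) hB
  refine ⟨fun h0 => ?_, fun h0 => map_apply_eq α hA ▸ hσ α h0⟩
  have hA' : MeasurableSet ((α * ·) ⁻¹' A) := hA.preimage (measurable_const_mul α)
  have h := hσ α⁻¹ h0
  rw [map_apply_eq α⁻¹ hA', ← Set.preimage_comp, Function.comp_def] at h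
  simpa [← mul_assoc] using h

variable (μ σ : Measure G) [SFinite μ] [SFinite σ] [μ.IsMulRightInvariant]

theorem prod_preimage_mul {A : Set G} (hA : MeasurableSet A) :
    μ.prod σ ((fun p : G × G => p.1 * p.2) ⁻¹' A) = μ A * σ Set.univ := by
  rw [prod_apply_symm (measurable_mul hA)]
  simp_rw [Set.preimage_preimage, measure_preimage_mul_right, lintegral_const]

variable {μ σ}

theorem IsMulLeftQuasiInvariant.absolutelyContinuous_rightInvariant
    (hσ : σ.IsMulLeftQuasiInvariant) (hμ : μ ≠ 0) : σ ≪ μ := by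
  refine AbsolutelyContinuous.mk fun A hA hμA => ?_
  have hprod : μ.prod σ ((fun p : G × G => p.1 * p.2) ⁻¹' A) = 0 := by
    rw [prod_preimage_mul μ σ hA, hμA, zero_mul]
  rw [measure_prod_null (measurable_mul hA)] at hprod
  have : (ae μ).NeBot := ae_neBot.mpr hμ
  obtain ⟨α, hα⟩ := hprod.exists
  exact (hσ.measure_preimage_mul_left_eq_zero_iff α hA).mp hα

theorem IsMulLeftQuasiInvariant.rightInvariant_absolutelyContinuous
    (hσ : σ.IsMulLeftQuasiInvariant) (hσ0 : σ ≠ 0) : μ ≪ σ := by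
  refine AbsolutelyContinuous.mk fun A hA hσA => ?_
  have hprod : μ.prod σ ((fun p : G × G => p.1 * p.2) ⁻¹' A) = 0 :=
    (measure_prod_null (measurable_mul hA)).mpr <| Filter.Eventually.of_forall fun α =>
      (hσ.measure_preimage_mul_left_eq_zero_iff α hA).mpr hσA
  rw [prod_preimage_mul μ σ hA] at hprod
  exact (mul_eq_zero.mp hprod).resolve_right (measure_univ_eq_zero.not.mpr hσ0)

end MeasureTheory.Measure

/-- If `σ` is a nonzero finite Borel measure on the unit circle such that every rotate
`σ^α` is absolutely continuous with respect to `σ`, then `σ` is equivalent to the Haar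
probability measure on the circle. -/
theorem stmt0 (σ : Measure Circle) [IsFiniteMeasure σ] (hσ : σ ≠ 0)
    (h : ∀ α : Circle, σ.map (fun z => α * z) ≪ σ) :
    σ ≪ (Measure.haar : Measure Circle) ∧ (Measure.haar : Measure Circle) ≪ σ :=
  ⟨Measure.IsMulLeftQuasiInvariant.absolutelyContinuous_rightInvariant h (NeZero.ne _),
    Measure.IsMulLeftQuasiInvariant.rightInvariant_absolutelyContinuous h hσ⟩
end

section
/- Let d ≥ 1 and let f : ℝ^d → ℝ be continuously differentiable (of class C¹). Suppose the set {x ∈ ℝ^d : ∇f(x) = 0} has Lebesgue measure zero in ℝ^d. Then the pushforward measure f_*(m_{ℝ^d}) of the Lebesgue measure on ℝ^d under f is absolutely continuous with respect to the Lebesgue measure m_ℝ on ℝ. -/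
/-!
Near a point `x` where `f' := fderiv ℝ f x` is surjective, choose a continuous right inverse `R`
of `f'`. The map `F y = y + R (f y - f' y)` has derivative the identity at `x` and satisfies
`f = f' ∘ F`, so `f ⁻¹' A = F ⁻¹' (f' ⁻¹' A)`. The linear preimage `f' ⁻¹' A` of a null set is
null, and so is its preimage under the local diffeomorphism `F`, whose local inverse maps null sets
to null sets. Hence `f ⁻¹' A` is locally null away from the critical set, which is null.
-/

open MeasureTheory Measure Function Filter Topology Set

section

variable {E G : Type*}
  [NormedAddCommGroup E] [NormedSpace ℝ E] [FiniteDimensional ℝ E]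
  [MeasurableSpace E] [BorelSpace E] (μ : Measure E) [IsAddHaarMeasure μ]
  [NormedAddCommGroup G] [NormedSpace ℝ G]
  [MeasurableSpace G] [BorelSpace G] (ν : Measure G) [IsAddHaarMeasure ν]

theorem ContinuousLinearMap.addHaar_preimage_eq_zero {L : E →L[ℝ] G} (hL : Surjective L)
    {s : Set G} (hs : ν s = 0) : μ (L ⁻¹' s) = 0 := by
  obtain ⟨c, -, hc⟩ := L.toLinearMap.exists_map_addHaar_eq_smul_addHaar μ ν hL
  refine nonpos_iff_eq_zero.1 ((le_map_apply L.continuous.aemeasurable s).trans ?_)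
  simp [← ContinuousLinearMap.coe_coe, hc, hs]

theorem ContDiffAt.exists_mem_nhds_addHaar_preimage_inter_eq_zero {F : E → E} {e : E ≃L[ℝ] E}
    {x : E} (hF : ContDiffAt ℝ 1 F x) (hF' : HasFDerivAt F (e : E →L[ℝ] E) x) :
    ∃ v ∈ 𝓝 x, ∀ s, μ s = 0 → μ (F ⁻¹' s ∩ v) = 0 := by
  set Φ := hF.toOpenPartialHomeomorph F hF' one_ne_zero
  have hg : ∀ᶠ z in 𝓝 (F x), DifferentiableAt ℝ Φ.symm z :=
    (hF.to_localInverse hF' one_ne_zero).eventually (by simp) |>.mono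
      fun z hz => hz.differentiableAt one_ne_zero
  set D := {z | DifferentiableAt ℝ Φ.symm z}
  refine ⟨Φ.source ∩ F ⁻¹' D,
    inter_mem (Φ.open_source.mem_nhds (hF.mem_toOpenPartialHomeomorph_source hF' one_ne_zero))
      (hF.continuousAt.preimage_mem_nhds hg), fun s hs => ?_⟩
  have himage : μ (Φ.symm '' (s ∩ D)) = 0 :=
    addHaar_image_eq_zero_of_differentiableOn_of_addHaar_eq_zero μ
      (fun z hz => (hz.2 : DifferentiableAt ℝ Φ.symm z).differentiableWithinAt)
      (measure_mono_null inter_subset_left hs)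
  refine measure_mono_null ?_ himage
  rintro y ⟨hys, hysrc, hyD⟩
  exact ⟨F y, ⟨hys, hyD⟩, Φ.left_inv hysrc⟩

theorem ContDiffAt.exists_mem_nhds_addHaar_preimage_inter_eq_zero_of_surjective_fderiv
    [FiniteDimensional ℝ G] {f : E → G} {x : E} (hf : ContDiffAt ℝ 1 f x)
    (hx : Surjective (fderiv ℝ f x)) :
    ∃ v ∈ 𝓝 x, ∀ s, ν s = 0 → μ (f ⁻¹' s ∩ v) = 0 := by
  set L := fderiv ℝ f x
  obtain ⟨R, hR⟩ := L.exists_rightInverse_of_surjective (LinearMap.range_eq_top.2 hx)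
  set F : E → E := fun y => y + R (f y - L y)
  have hLR : ∀ z, L (R z) = z := fun z => DFunLike.congr_fun hR z
  have hLF : ∀ y, L (F y) = f y := fun y => by
    simp only [F, map_add, hLR]
    abel
  have hF : ContDiffAt ℝ 1 F x :=
    contDiffAt_id.add (R.contDiff.contDiffAt.comp x (hf.sub L.contDiff.contDiffAt))
  have hF' : HasFDerivAt F ((ContinuousLinearEquiv.refl ℝ E : E ≃L[ℝ] E) : E →L[ℝ] E) x := by
    have hf' : HasFDerivAt f L x := (hf.differentiableAt one_ne_zero).hasFDerivAt
    convert (hasFDerivAt_id x).add (R.hasFDerivAt.comp x (hf'.sub L.hasFDerivAt)) using 1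
    · ext y
      simp [F]
    · simp
  obtain ⟨v, hv, hnull⟩ := hF.exists_mem_nhds_addHaar_preimage_inter_eq_zero μ hF'
  refine ⟨v, hv, fun s hs => ?_⟩
  have hpre : f ⁻¹' s = F ⁻¹' (L ⁻¹' s) := by
    ext y
    simp [hLF]
  rw [hpre]
  exact hnull _ (L.addHaar_preimage_eq_zero μ ν hx hs)

theorem ContDiff.map_addHaar_absolutelyContinuous
    [FiniteDimensional ℝ G] {f : E → G} (hf : ContDiff ℝ 1 f)
    (hcrit : μ {x | ¬Surjective (fderiv ℝ f x)} = 0) :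
    μ.map f ≪ ν := by
  refine AbsolutelyContinuous.mk fun s hs hs0 => ?_
  rw [map_apply hf.continuous.measurable hs]
  set C := {x | ¬Surjective (fderiv ℝ f x)}
  have hregular : μ (f ⁻¹' s \ C) = 0 := by
    refine measure_null_of_locally_null _ fun x hx => ?_
    obtain ⟨v, hv, hnull⟩ :=
      hf.contDiffAt.exists_mem_nhds_addHaar_preimage_inter_eq_zero_of_surjective_fderiv μ ν
        (not_not.1 hx.2)
    exact ⟨_, inter_mem_nhdsWithin _ hv,
      measure_mono_null (inter_subset_inter_left _ sdiff_subset) (hnull s hs0)⟩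
  exact measure_mono_null (sdiff_subset_iff.1 subset_rfl) (measure_union_null hcrit hregular)

end

theorem stmt1_general (d : ℕ) (f : (Fin d → ℝ) → ℝ) (hf : ContDiff ℝ 1 f)
    (hcrit : volume {x : Fin d → ℝ | fderiv ℝ f x = 0} = 0) :
    (volume : Measure (Fin d → ℝ)).map f ≪ (volume : Measure ℝ) := by
  refine hf.map_addHaar_absolutelyContinuous volume volume
    (measure_mono_null (fun x hx => ?_) hcrit)
  by_contra hne
  exact hx (LinearMap.surjective_iff_ne_zero.2
    fun h => hne (ContinuousLinearMap.coe_injective h))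

/-- If `f : ℝ^d → ℝ` is `C¹` and its critical set has Lebesgue measure zero, then the
pushforward of Lebesgue measure under `f` is absolutely continuous with respect to
Lebesgue measure on `ℝ`. -/
theorem stmt1 (d : ℕ) (hd : 1 ≤ d) (f : (Fin d → ℝ) → ℝ) (hf : ContDiff ℝ 1 f)
    (hcrit : volume {x : Fin d → ℝ | fderiv ℝ f x = 0} = 0) :
    (volume : Measure (Fin d → ℝ)).map f ≪ (volume : Measure ℝ) :=
  stmt1_general d f hf hcrit
end

section
/- Let d ≥ 1 and let p : ℝ^d → ℝ be a polynomial function (the evaluation of a multivariate real polynomial) which is not constant. Then the pushforward p_*(m_{ℝ^d}) of the Lebesgue measure on ℝ^d under p is absolutely continuous with respect to the Lebesgue measure on ℝ. -/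
/-!
Slicing along the first coordinate reduces the theorem to one variable. After renaming, some
variable `X₀` occurs in `p`; write `p = ∑ aₖ(y) X₀ᵏ` with leading coefficient `L` in the other
variables. `L` vanishes only on a null set (by induction on the number of variables), and off it
`t ↦ p(t, y)` is a nonconstant one-variable polynomial. Such a polynomial has finitely many
critical points and is locally injective elsewhere, so by the one-dimensional change of variables
formula it pulls null sets back to null sets.
-/

open MeasureTheory Measure Set Filter Topology

theorem HasStrictDerivAt.exists_mem_nhds_injOn {f : ℝ → ℝ} {f' a : ℝ}
    (hf : HasStrictDerivAt f f' a) (hf' : f' ≠ 0) : ∃ u ∈ 𝓝 a, InjOn f u :=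
  ⟨_, hf.eventually_left_inverse hf', fun x (hx : _ = x) y (hy : _ = y) hxy => by
    rw [← hx, ← hy, hxy]⟩

theorem ae_restrict_deriv_eq_zero_of_volume_image_eq_zero {f f' : ℝ → ℝ} {s : Set ℝ}
    (hf : ∀ x, HasDerivAt f (f' x) x) (hs : MeasurableSet s) (hinj : InjOn f s)
    (himage : volume (f '' s) = 0) : ∀ᵐ x ∂volume.restrict s, f' x = 0 := by
  have hf'_meas : Measurable f' := by
    rw [← funext fun x => (hf x).deriv]
    exact measurable_deriv f
  have hint : ∫⁻ x in s, ENNReal.ofReal |f' x| = 0 := by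
    have hcov := lintegral_image_eq_lintegral_abs_deriv_mul hs
      (fun x _ => (hf x).hasDerivWithinAt) hinj 1
    simpa [himage] using hcov.symm
  filter_upwards [(lintegral_eq_zero_iff (by fun_prop)).1 hint] with x hx
  simpa using hx

theorem quasiMeasurePreserving_of_hasStrictDerivAt {f f' : ℝ → ℝ}
    (hf : ∀ x, HasStrictDerivAt f (f' x) x) (hcrit : volume {x | f' x = 0} = 0) :
    QuasiMeasurePreserving f volume volume := by
  have hf_meas : Measurable f :=
    (Differentiable.continuous fun x => (hf x).hasDerivAt.differentiableAt).measurable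
  refine ⟨hf_meas, AbsolutelyContinuous.mk fun A hA hA0 => ?_⟩
  rw [map_apply hf_meas hA]
  suffices h : volume (f ⁻¹' A \ {x | f' x = 0}) = 0 from
    measure_mono_null (sdiff_union_self.superset.trans' subset_union_left)
      (measure_union_null h hcrit)
  refine measure_null_of_locally_null _ fun a ⟨_, ha⟩ => ?_
  obtain ⟨u, hu, hinj⟩ := (hf a).exists_mem_nhds_injOn ha
  obtain ⟨v, hvu, hv, hav⟩ := mem_nhds_iff.1 hu
  have hs : MeasurableSet (f ⁻¹' A ∩ v) := hf_meas hA |>.inter hv.measurableSet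
  have hcrit_s := ae_restrict_deriv_eq_zero_of_volume_image_eq_zero (fun x => (hf x).hasDerivAt) hs
    (hinj.mono (inter_subset_right.trans hvu))
    (measure_mono_null (image_subset_iff.2 inter_subset_left) hA0)
  refine ⟨_, inter_mem_nhdsWithin _ (hv.mem_nhds hav), measure_mono_null ?_
    ((ae_restrict_iff' hs).1 hcrit_s)⟩
  rintro x ⟨⟨hxA, hx0⟩, hxv⟩ hx
  exact hx0 (hx ⟨hxA, hxv⟩)

theorem Polynomial.quasiMeasurePreserving_eval {q : Polynomial ℝ} (hq : q.natDegree ≠ 0) :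
    QuasiMeasurePreserving (fun t => q.eval t) volume volume := by
  have hq' : Polynomial.derivative q ≠ 0 := mt Polynomial.derivative_eq_zero.1 hq
  exact quasiMeasurePreserving_of_hasStrictDerivAt q.hasStrictDerivAt
    ((Polynomial.finite_setOfPred_isRoot hq').measure_zero _)

theorem volume_eq_zero_of_ae_volume_cons_eq_zero {α : Type*} [MeasureSpace α]
    [SigmaFinite (volume : Measure α)] {n : ℕ} {S : Set (Fin (n + 1) → α)} (hS : MeasurableSet S)
    (h : ∀ᵐ y : Fin n → α, volume {a : α | Fin.cons a y ∈ S} = 0) : volume S = 0 := by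
  have hmp : MeasurePreserving (fun z : (Fin n → α) × α => (Fin.cons z.2 z.1 : Fin (n + 1) → α))
      (volume.prod volume) volume := by
    convert (volume_preserving_piFinSuccAbove (fun _ => α) 0).symm.comp
      (measurePreserving_swap (μ := (volume : Measure (Fin n → α))) (ν := (volume : Measure α)))
      using 1
    · rfl
    · funext z
      simp [MeasurableEquiv.piFinSuccAbove_symm_apply, Fin.insertNthEquiv_zero]
      rfl
  rw [← hmp.measure_preimage hS.nullMeasurableSet]
  exact measure_prod_null_of_ae_null (hmp.measurable hS) h

namespace MvPolynomial

theorem quasiMeasurePreserving_eval_of_rename {σ τ : Type*} [Fintype σ] [Fintype τ]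
    (e : σ ≃ τ) {p : MvPolynomial σ ℝ}
    (h : QuasiMeasurePreserving (fun y : τ → ℝ => eval y (rename e p)) volume volume) :
    QuasiMeasurePreserving (fun x : σ → ℝ => eval x p) volume volume := by
  have hcomp : (fun x : σ → ℝ => eval x p) =
      (fun y : τ → ℝ => eval y (rename e p)) ∘ MeasurableEquiv.arrowCongr' e (.refl ℝ) := by
    funext x
    simp [eval_rename, MeasurableEquiv.arrowCongr', Equiv.arrowCongr', Function.comp_def]
  rw [hcomp]
  exact h.comp (volume_preserving_arrowCongr' e _ (.id volume)).quasiMeasurePreserving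

theorem quasiMeasurePreserving_eval_of_finSuccEquiv {n : ℕ} {p : MvPolynomial (Fin (n + 1)) ℝ}
    (hdeg : (finSuccEquiv ℝ n p).natDegree ≠ 0)
    (hlead : ∀ᵐ y : Fin n → ℝ, eval y (finSuccEquiv ℝ n p).leadingCoeff ≠ 0) :
    QuasiMeasurePreserving (fun x => eval x p) volume volume := by
  have hp_meas : Measurable fun x : Fin (n + 1) → ℝ => eval x p := (continuous_eval p).measurable
  refine ⟨hp_meas, AbsolutelyContinuous.mk fun A hA hA0 => ?_⟩
  rw [map_apply hp_meas hA]
  refine volume_eq_zero_of_ae_volume_cons_eq_zero (hp_meas hA) ?_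
  filter_upwards [hlead] with y hy
  have hslice := (Polynomial.quasiMeasurePreserving_eval
    ((Polynomial.natDegree_map_of_leadingCoeff_ne_zero _ hy).trans_ne hdeg)).preimage_null hA0
  convert hslice using 2
  ext a
  simp [eval_eq_eval_mv_eval']

theorem quasiMeasurePreserving_eval :
    ∀ {n : ℕ} {p : MvPolynomial (Fin n) ℝ}, p.vars.Nonempty →
      QuasiMeasurePreserving (fun x => eval x p) volume volume
  | 0, _, ⟨i, _⟩ => i.elim0
  | n + 1, p, ⟨i, hi⟩ => by
    refine quasiMeasurePreserving_eval_of_rename (Equiv.swap i 0) ?_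
    set q := rename (Equiv.swap i 0) p
    have hdeg : (finSuccEquiv ℝ n q).natDegree ≠ 0 := by
      rw [natDegree_finSuccEquiv, ← Equiv.swap_apply_left i 0,
        degreeOf_rename_of_injective (Equiv.injective _)]
      exact mem_vars_iff_degreeOf_ne_zero.1 hi
    set L := (finSuccEquiv ℝ n q).leadingCoeff
    have hL : L ≠ 0 := Polynomial.leadingCoeff_ne_zero.2 (by rintro h; simp [h] at hdeg)
    have hlead : ∀ᵐ y : Fin n → ℝ, eval y L ≠ 0 := by
      rcases L.vars.eq_empty_or_nonempty with hc | hvars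
      · rw [vars_eq_empty_iff_eq_C] at hc
        refine ae_of_all _ fun y => ?_
        rw [hc, eval_C]
        exact fun h0 => hL (by rw [hc, h0, C_0])
      · exact (quasiMeasurePreserving_eval hvars).ae (ae_ne volume 0)
    exact quasiMeasurePreserving_eval_of_finSuccEquiv hdeg hlead

end MvPolynomial

theorem stmt2_general (d : ℕ) (p : MvPolynomial (Fin d) ℝ)
    (hp : ¬∃ c : ℝ, ∀ x : Fin d → ℝ, MvPolynomial.eval x p = c) :
    (volume : Measure (Fin d → ℝ)).map (fun x => MvPolynomial.eval x p) ≪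
      (volume : Measure ℝ) := by
  have hvars : p.vars.Nonempty := by
    rw [Finset.nonempty_iff_ne_empty, Ne, MvPolynomial.vars_eq_empty_iff_eq_C]
    refine fun hC => hp ⟨p.coeff 0, fun x => ?_⟩
    conv_lhs => rw [hC]
    exact MvPolynomial.eval_C _
  exact (MvPolynomial.quasiMeasurePreserving_eval hvars).absolutelyContinuous

/-- If `p` is a nonconstant real polynomial in `d` variables, then the pushforward of the
Lebesgue measure on `ℝ^d` under the evaluation of `p` is absolutely continuous with respect
to the Lebesgue measure on `ℝ`. -/
theorem stmt2 (d : ℕ) (hd : 1 ≤ d) (p : MvPolynomial (Fin d) ℝ)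
    (hp : ¬∃ c : ℝ, ∀ x : Fin d → ℝ, MvPolynomial.eval x p = c) :
    (volume : Measure (Fin d → ℝ)).map (fun x => MvPolynomial.eval x p) ≪
      (volume : Measure ℝ) :=
  stmt2_general d p hp
end

section
/- Let G be a group, N a normal subgroup of G, and τ ∈ G an element such that G is generated by N together with τ (i.e. the subgroup generated by N ∪ {τ} is all of G). Then the subgroup of G generated by the set of commutators {[τ, g] : g ∈ N} is a normal subgroup of G. -/
/-!
Write `K` for the subgroup generated by `S = {⁅τ, g⁆ : g ∈ N}`; it suffices that `N` and `τ`
normalize `K`. For `n, g ∈ N` the identity `⁅τ, n * g⁆ = ⁅τ, n⁆ * (n * ⁅τ, g⁆ * n⁻¹)` puts the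
`n`-conjugate of a generator in `K`. Conjugation by `τ` fixes `τ`, so it sends `⁅τ, g⁆` to
`⁅τ, τ * g * τ⁻¹⁆`, and since `τ` normalizes `N` it permutes `S`.
-/

open scoped commutatorElement

namespace Subgroup

variable {G : Type*} [Group G]

lemma le_normalizer_closure_commutatorElement (τ : G) (H : Subgroup G) :
    H ≤ normalizer (closure {x | ∃ g ∈ H, x = ⁅τ, g⁆}) := by
  refine le_normalizer_closure_iff.mpr ?_
  rintro n hn _ ⟨g, hg, rfl⟩
  have hτn : ⁅τ, n⁆ ∈ closure {x | ∃ g ∈ H, x = ⁅τ, g⁆} := subset_closure ⟨n, hn, rfl⟩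
  have hτng : ⁅τ, n * g⁆ ∈ closure {x | ∃ g ∈ H, x = ⁅τ, g⁆} :=
    subset_closure ⟨n * g, mul_mem hn hg, rfl⟩
  rw [commutatorElement_mul_right_eq_mul_conj] at hτng
  simpa only [mul_assoc, mul_mem_cancel_left hτn] using hτng

lemma mem_normalizer_setOf_commutatorElement {τ : G} {H : Subgroup G}
    (hτ : τ ∈ normalizer (H : Set G)) : τ ∈ normalizer {x | ∃ g ∈ H, x = ⁅τ, g⁆} := by
  have hS : {x | ∃ g ∈ H, x = ⁅τ, g⁆} = (⁅τ, ·⁆) '' H := by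
    ext; simp [eq_comm]
  have hconj : ∀ g, MulAut.conj τ ⁅τ, g⁆ = ⁅τ, MulAut.conj τ g⁆ := fun g ↦ by
    simp [map_commutatorElement]
  rw [mem_normalizer_iff_conj_image_eq, hS, Set.image_image]
  simp_rw [hconj]
  rw [← Set.image_image (⁅τ, ·⁆) (MulAut.conj τ), mem_normalizer_iff_conj_image_eq.mp hτ]

end Subgroup

/-- If `G` is generated by a normal subgroup `N` together with an element `τ`, then the
subgroup generated by the commutators `{[τ, g] : g ∈ N}` is normal in `G`. -/
theorem stmt4 {G : Type*} [Group G] (N : Subgroup G) (hN : N.Normal) (τ : G)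
    (hgen : Subgroup.closure ((N : Set G) ∪ {τ}) = ⊤) :
    (Subgroup.closure {x : G | ∃ g ∈ N, x = ⁅τ, g⁆}).Normal := by
  rw [← Subgroup.normalizer_eq_top_iff, eq_top_iff, ← hgen, Subgroup.closure_le,
    Set.union_subset_iff, Set.singleton_subset_iff]
  have hτN : τ ∈ Subgroup.normalizer (N : Set G) := by
    rw [Subgroup.normalizer_eq_top_iff.mpr hN]
    exact Subgroup.mem_top τ
  exact ⟨Subgroup.le_normalizer_closure_commutatorElement τ N,
    Subgroup.normalizer_le_normalizer_closure _
      (Subgroup.mem_normalizer_setOf_commutatorElement hτN)⟩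
end

section
/- Let V be a finite-dimensional real vector space, let A : V → V be an invertible linear map which is unipotent (i.e. A − id is nilpotent), let W ⊆ V be a linear subspace, and let m ≥ 1 be an integer such that A^{km}(W) = W for every integer k ∈ ℤ. Then A^{n}(W) = W for every integer n ∈ ℤ; in particular A(W) = W. -/
/-!
Write `A = 1 + N` with `N` nilpotent. For `w ∈ W` and a functional `φ` vanishing on `W`, the
binomial expansion makes `j ↦ φ (A ^ j w)` a polynomial in `j`. It vanishes at every multiple of
`m`, hence identically, so `A w ∈ W`. Dimension count upgrades `A(W) ⊆ W` to `A(W) = W`, and the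
stabilizer of `W` is a subgroup, so it contains all integer powers of `A`.
-/

open Polynomial Finset Pointwise

theorem one_add_pow_eq_sum_range_of_pow_eq_zero {R : Type*} [Semiring R] {N : R} {r : ℕ}
    (hN : N ^ r = 0) (j : ℕ) : (1 + N) ^ j = ∑ k ∈ range r, (j.choose k : R) * N ^ k := by
  have hsupp : ∀ k, (j.choose k : R) * N ^ k ≠ 0 → k ∈ range (min (j + 1) r) := fun k hk ↦ by
    refine mem_range.2 (lt_min (Nat.lt_succ_of_le (le_of_not_gt fun hjk ↦ hk ?_))
      (lt_of_not_ge fun hrk ↦ hk ?_))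
    · simp [Nat.choose_eq_zero_of_lt hjk]
    · simp [pow_eq_zero_of_le hrk hN]
  have htrunc : ∀ n, min (j + 1) r ≤ n → ∑ k ∈ range n, (j.choose k : R) * N ^ k =
      ∑ k ∈ range (min (j + 1) r), (j.choose k : R) * N ^ k :=
    fun n hn ↦ (sum_subset (range_mono hn) fun k _ hk ↦ not_not.1 (hk ∘ hsupp k)).symm
  rw [add_comm, (Commute.one_right N).add_pow, htrunc r (min_le_right _ _),
    ← htrunc (j + 1) (min_le_left _ _)]
  simp only [one_pow, mul_one, (Nat.cast_commute _ _).eq]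

theorem exists_polynomial_eval_natCast_eq_sum_choose {K : Type*} [Field K] [CharZero K]
    (c : ℕ → K) (r : ℕ) :
    ∃ P : K[X], ∀ j : ℕ, P.eval (j : K) = ∑ k ∈ range r, (j.choose k : K) * c k := by
  refine ⟨∑ k ∈ range r, C (c k / k.factorial) * descPochhammer K k, fun j ↦ ?_⟩
  simp only [eval_finsetSum, eval_mul, eval_C, Nat.cast_choose_eq_descPochhammer_div]
  refine sum_congr rfl fun k _ ↦ ?_
  ring

theorem Polynomial.eq_zero_of_eval_natCast_mul_eq_zero {K : Type*} [CommRing K] [IsDomain K]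
    [CharZero K] {P : K[X]} {m : ℕ} (hm : m ≠ 0) (h : ∀ k : ℕ, P.eval ((k * m : ℕ) : K) = 0) :
    P = 0 :=
  P.eq_zero_of_infinite_isRoot <| Set.infinite_of_injective_forall_mem
    (fun _ _ hab ↦ Nat.eq_of_mul_eq_mul_right (Nat.pos_of_ne_zero hm) (Nat.cast_injective hab)) h

theorem Submodule.map_le_of_isNilpotent_sub_one {K V : Type*} [Field K] [CharZero K]
    [AddCommGroup V] [Module K V] {B : Module.End K V} (hB : IsNilpotent (B - 1))
    {W : Submodule K V} {m : ℕ} (hm : m ≠ 0) (h : ∀ k : ℕ, W.map (B ^ (k * m)) ≤ W) :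
    W.map B ≤ W := by
  obtain ⟨r, hr⟩ := hB
  rintro _ ⟨w, hw, rfl⟩
  by_contra hBw
  obtain ⟨φ, hφBw, hWφ⟩ := Submodule.exists_le_ker_of_notMem hBw
  have hpow : ∀ j : ℕ, φ ((B ^ j) w) = ∑ k ∈ range r, (j.choose k : K) * φ (((B - 1) ^ k) w) := by
    intro j
    rw [← add_sub_cancel 1 B, one_add_pow_eq_sum_range_of_pow_eq_zero hr]
    simp [Module.End.natCast_apply]
  obtain ⟨P, hP⟩ := exists_polynomial_eval_natCast_eq_sum_choose (fun k ↦ φ (((B - 1) ^ k) w)) r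
  have hP0 : P = 0 := eq_zero_of_eval_natCast_mul_eq_zero hm fun k ↦ by
    rw [hP, ← hpow]
    exact hWφ (h k ⟨w, hw, rfl⟩)
  apply hφBw
  rw [← pow_one B, hpow, ← hP, hP0, eval_zero]

theorem Submodule.map_zpow_eq_self {R V : Type*} [Semiring R] [AddCommMonoid V] [Module R V]
    {A : V ≃ₗ[R] V} {W : Submodule R V} (h : W.map (A : V →ₗ[R] V) = W) (n : ℤ) :
    W.map ((A ^ n : V ≃ₗ[R] V) : V →ₗ[R] V) = W :=
  -- for the pointwise action, `A • W` is definitionally `W.map A`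
  (MulAction.stabilizer (V ≃ₗ[R] V) W).zpow_mem (x := A) h n

/-- If `A` is a unipotent linear automorphism of a finite-dimensional real vector space `V`,
`W` is a subspace, and `m ≥ 1` is such that `A^{km}(W) = W` for all integers `k`, then
`A^n(W) = W` for all integers `n`; in particular `A(W) = W`. -/
theorem stmt7 {V : Type*} [AddCommGroup V] [Module ℝ V] [FiniteDimensional ℝ V]
    (A : V ≃ₗ[ℝ] V) (hA : IsNilpotent ((A : V →ₗ[ℝ] V) - 1))
    (W : Submodule ℝ V) (m : ℕ) (hm : 1 ≤ m)
    (h : ∀ k : ℤ, W.map ((A ^ (k * (m : ℤ)) : V ≃ₗ[ℝ] V) : V →ₗ[ℝ] V) = W) :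
    (∀ n : ℤ, W.map ((A ^ n : V ≃ₗ[ℝ] V) : V →ₗ[ℝ] V) = W) ∧
      W.map ((A : V →ₗ[ℝ] V)) = W := by
  have hAW : W.map (A : V →ₗ[ℝ] V) ≤ W :=
    Submodule.map_le_of_isNilpotent_sub_one hA (Nat.one_le_iff_ne_zero.mp hm) fun k ↦ by
      have hcoe : ((A ^ (k * m) : V ≃ₗ[ℝ] V) : V →ₗ[ℝ] V) = (A : V →ₗ[ℝ] V) ^ (k * m) :=
        map_pow LinearEquiv.automorphismGroup.toLinearMapMonoidHom A (k * m)
      rw [← hcoe, ← zpow_natCast]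
      exact_mod_cast (h k).le
  have hAW_eq : W.map (A : V →ₗ[ℝ] V) = W :=
    Submodule.eq_of_le_of_finrank_le hAW (LinearEquiv.finrank_map_eq A W).ge
  exact ⟨Submodule.map_zpow_eq_self hAW_eq, hAW_eq⟩
end

section
/- Let G be the group of real 4×4 upper unitriangular matrices (upper triangular matrices with all diagonal entries equal to 1) under matrix multiplication, and let y_τ, u_τ ∈ (0,1). Let τ ∈ G be the matrix whose only nonzero off-diagonal entries are the (1,3)-entry equal to y_τ and the (2,3)-entry equal to u_τ. Then for every g ∈ G, if the commutator [τ, g] = τ·g·τ⁻¹·g⁻¹ commutes with every element of G (i.e. [τ,g] lies in the center Z(G)), then [τ, g] is the identity matrix. In other words, {[τ, g] : g ∈ G} ∩ Z(G) = {e_G}. -/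
/-!
Write `U(a, b, c, d, e, f)` for the unitriangular matrix with upper entries `a, b, c` (row 0),
`d, e` (row 1) and `f` (row 2). For `g = U(a, …, f)` one computes
`[τ, g] = U(0, -a uτ, yτ f + a uτ f, 0, uτ f, 0)`, while a central element of `G` has all
coordinates but the corner one equal to zero. So a central `[τ, g]` forces `a uτ = uτ f = 0`,
hence `a = f = 0` as `uτ ≠ 0`, and then `[τ, g] = 1`.
-/

open Matrix

/-- A matrix is upper unitriangular: ones on the diagonal, zeros below. -/
def IsUnitriangular (M : Matrix (Fin 4) (Fin 4) ℝ) : Prop :=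
  (∀ i : Fin 4, M i i = 1) ∧ ∀ i j : Fin 4, j < i → M i j = 0

/-- The element τ of the 4-dimensional Heisenberg group with (1,3)-entry `yτ` and
(2,3)-entry `uτ` (1-based indexing), all other off-diagonal entries zero. -/
def heisTau (yτ uτ : ℝ) : Matrix (Fin 4) (Fin 4) ℝ :=
  fun i j =>
    if i = j then 1
    else if i = 0 ∧ j = 2 then yτ
    else if i = 1 ∧ j = 2 then uτ
    else 0

def unitri (a b c d e f : ℝ) : Matrix (Fin 4) (Fin 4) ℝ :=
  !![1, a, b, c; 0, 1, d, e; 0, 0, 1, f; 0, 0, 0, 1]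

section Coordinates

variable {a b c d e f a' b' c' d' e' f' : ℝ}

theorem unitri_isUnitriangular : IsUnitriangular (unitri a b c d e f) := by
  refine ⟨fun i => ?_, fun i j hji => ?_⟩
  · fin_cases i <;> simp [unitri]
  · fin_cases i <;> fin_cases j <;> simp_all [unitri]

theorem IsUnitriangular.exists_eq_unitri {M : Matrix (Fin 4) (Fin 4) ℝ}
    (hM : IsUnitriangular M) : ∃ a b c d e f, M = unitri a b c d e f := by
  obtain ⟨hdiag, hlow⟩ := hM
  refine ⟨M 0 1, M 0 2, M 0 3, M 1 2, M 1 3, M 2 3, ?_⟩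
  ext i j
  fin_cases i <;> fin_cases j <;> simp [unitri, hdiag, hlow]

theorem unitri_inj :
    unitri a b c d e f = unitri a' b' c' d' e' f' ↔
      a = a' ∧ b = b' ∧ c = c' ∧ d = d' ∧ e = e' ∧ f = f' := by
  refine ⟨fun h => ?_, by rintro ⟨rfl, rfl, rfl, rfl, rfl, rfl⟩; rfl⟩
  have entry (i j : Fin 4) := congr_fun₂ h i j
  exact ⟨by simpa [unitri] using entry 0 1, by simpa [unitri] using entry 0 2,
    by simpa [unitri] using entry 0 3, by simpa [unitri] using entry 1 2,
    by simpa [unitri] using entry 1 3, by simpa [unitri] using entry 2 3⟩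

@[simp]
theorem unitri_zero : unitri 0 0 0 0 0 0 = 1 := by
  ext i j
  fin_cases i <;> fin_cases j <;> simp [unitri]

theorem unitri_mul :
    unitri a b c d e f * unitri a' b' c' d' e' f' =
      unitri (a + a') (b + b' + a * d') (c + c' + a * e' + b * f') (d + d')
        (e + e' + d * f') (f + f') := by
  ext i j
  fin_cases i <;> fin_cases j <;> simp [unitri, mul_apply, Fin.sum_univ_four] <;> ring

theorem unitri_inv :
    (unitri a b c d e f)⁻¹ =
      unitri (-a) (a * d - b) (-c + a * e + b * f - a * d * f) (-d) (d * f - e) (-f) := by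
  refine inv_eq_right_inv ?_
  rw [unitri_mul, ← unitri_zero, unitri_inj]
  refine ⟨?_, ?_, ?_, ?_, ?_, ?_⟩ <;> ring

theorem unitri_coords_eq_zero_of_commute
    (hM : ∀ N, IsUnitriangular N → unitri a b c d e f * N = N * unitri a b c d e f) :
    a = 0 ∧ b = 0 ∧ d = 0 ∧ e = 0 ∧ f = 0 := by
  have h₁ := hM (unitri 1 0 0 0 0 0) unitri_isUnitriangular
  have h₂ := hM (unitri 0 0 0 1 0 0) unitri_isUnitriangular
  have h₃ := hM (unitri 0 0 0 0 0 1) unitri_isUnitriangular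
  simp only [unitri_mul, unitri_inj] at h₁ h₂ h₃
  obtain ⟨-, hd, he, -⟩ := h₁
  obtain ⟨-, ha, -, -, hf, -⟩ := h₂
  obtain ⟨-, -, hb, -⟩ := h₃
  exact ⟨by linarith, by linarith, by linarith, by linarith, by linarith⟩

end Coordinates

theorem heisTau_eq_unitri (y u : ℝ) : heisTau y u = unitri 0 y 0 u 0 0 := by
  ext i j
  fin_cases i <;> fin_cases j <;> simp [heisTau, unitri]

theorem heisTau_commutator (y u a b c d e f : ℝ) :
    heisTau y u * unitri a b c d e f * (heisTau y u)⁻¹ * (unitri a b c d e f)⁻¹ =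
      unitri 0 (-(a * u)) (y * f + a * u * f) 0 (u * f) 0 := by
  rw [heisTau_eq_unitri, unitri_inv, unitri_inv, unitri_mul, unitri_mul, unitri_mul, unitri_inj]
  refine ⟨?_, ?_, ?_, ?_, ?_, ?_⟩ <;> ring

theorem stmt11_general (yτ uτ : ℝ) (hu : uτ ∈ Set.Ioo (0 : ℝ) 1)
    (g : Matrix (Fin 4) (Fin 4) ℝ) (hg : IsUnitriangular g)
    (hcenter : ∀ h : Matrix (Fin 4) (Fin 4) ℝ, IsUnitriangular h →
      (heisTau yτ uτ * g * (heisTau yτ uτ)⁻¹ * g⁻¹) * h =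
        h * (heisTau yτ uτ * g * (heisTau yτ uτ)⁻¹ * g⁻¹)) :
    heisTau yτ uτ * g * (heisTau yτ uτ)⁻¹ * g⁻¹ = 1 := by
  obtain ⟨a, b, c, d, e, f, rfl⟩ := hg.exists_eq_unitri
  rw [heisTau_commutator] at hcenter ⊢
  obtain ⟨-, hau, -, huf, -⟩ := unitri_coords_eq_zero_of_commute hcenter
  have hu₀ : uτ ≠ 0 := hu.1.ne'
  obtain rfl : a = 0 := by simpa [hu₀] using hau
  obtain rfl : f = 0 := by simpa [hu₀] using huf
  simp

/-- In the 4-dimensional Heisenberg group, for τ as above with `yτ, uτ ∈ (0,1)`, no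
nontrivial commutator `[τ, g]` lies in the center: if `[τ, g]` commutes with every
upper unitriangular matrix, then `[τ, g] = 1`. -/
theorem stmt11 (yτ uτ : ℝ) (hy : yτ ∈ Set.Ioo (0 : ℝ) 1) (hu : uτ ∈ Set.Ioo (0 : ℝ) 1)
    (g : Matrix (Fin 4) (Fin 4) ℝ) (hg : IsUnitriangular g)
    (hcenter : ∀ h : Matrix (Fin 4) (Fin 4) ℝ, IsUnitriangular h →
      (heisTau yτ uτ * g * (heisTau yτ uτ)⁻¹ * g⁻¹) * h =
        h * (heisTau yτ uτ * g * (heisTau yτ uτ)⁻¹ * g⁻¹)) :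
    heisTau yτ uτ * g * (heisTau yτ uτ)⁻¹ * g⁻¹ = 1 :=
  stmt11_general yτ uτ hu g hg hcenter
end
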